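/- Let (P, x_L, x_R) and (Q, y_L, y_R) be finite oriented posets with weight functions into a commutative ring R. Then the down weight matrix of the glued oriented poset P↗Q (with left vertex x_L and right vertex y_R) satisfies M_w((P↗Q)↘) = M_w(P↗) · M_w(Q↘), where the right-hand side is the product of 2×2 matrices over R. -/

import Mathlib

open Classical Relation

noncomputable section

variable {R : Type*} [CommRing R]

/-- A finite set `I` is a lower set (order ideal) for the relation `r`. -/
def IsLowerSetRel {α : Type*} (r : α → α → Prop) (I : Finset α) : Prop :=
  ∀ x ∈ I, ∀ y, r y x → y ∈ I

/-- The sum of the weights `∏ i ∈ I, w i` over all lower sets `I` of the relation `r`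
satisfying the condition `C`.  Taking `C = fun _ => True` gives the weight polynomial. -/
def wSum {α : Type*} [Fintype α] (r : α → α → Prop) (w : α → R) (C : Finset α → Prop) : R :=
  ∑ I ∈ Finset.univ.filter (fun I : Finset α => IsLowerSetRel r I ∧ C I), ∏ i ∈ I, w i

/-- The down weight matrix `M_w(P↘)` of an oriented poset `(P, xL, xR)`. -/
def downMat {α : Type*} [Fintype α] (r : α → α → Prop) (w : α → R) (xL xR : α) :
    Matrix (Fin 2) (Fin 2) R :=
  !![wSum r w (fun _ => True), -wSum r w (fun I => xR ∈ I);
     wSum r w (fun I => xL ∉ I), -wSum r w (fun I => xR ∈ I ∧ xL ∉ I)]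

/-- The up weight matrix `M_w(P↗)` of an oriented poset `(P, xL, xR)`. -/
def upMat {α : Type*} [Fintype α] (r : α → α → Prop) (w : α → R) (xL xR : α) :
    Matrix (Fin 2) (Fin 2) R :=
  !![wSum r w (fun I => xR ∈ I), wSum r w (fun I => xR ∉ I);
     wSum r w (fun I => xR ∈ I ∧ xL ∉ I), wSum r w (fun I => xR ∉ I ∧ xL ∉ I)]

/-- The order relation of the glued poset `P↘Q` on the disjoint union `P ⊔ Q`:
elements of `P` (resp. `Q`) compare as in `P` (resp. `Q`), an element `a ∈ Q` lies below
`b ∈ P` iff `a ≤ yL` in `Q` and `xR ≤ b` in `P`, and no element of `P` lies below an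
element of `Q`. -/
def glueDown {α β : Type*} (rP : α → α → Prop) (rQ : β → β → Prop) (xR : α) (yL : β) :
    α ⊕ β → α ⊕ β → Prop
  | .inl a, .inl b => rP a b
  | .inr a, .inr b => rQ a b
  | .inr a, .inl b => rQ a yL ∧ rP xR b
  | .inl _, .inr _ => False

/-- The order relation of the glued poset `P↗Q` on the disjoint union `P ⊔ Q`:
elements of `P` (resp. `Q`) compare as in `P` (resp. `Q`), an element `a ∈ P` lies below
`b ∈ Q` iff `a ≤ xR` in `P` and `yL ≤ b` in `Q`, and no element of `Q` lies below an
element of `P`. -/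
def glueUp {α β : Type*} (rP : α → α → Prop) (rQ : β → β → Prop) (xR : α) (yL : β) :
    α ⊕ β → α ⊕ β → Prop
  | .inl a, .inl b => rP a b
  | .inr a, .inr b => rQ a b
  | .inl a, .inr b => rP a xR ∧ rQ yL b
  | .inr _, .inl _ => False
section Aux

variable {α β : Type*} [Fintype α] [Fintype β] [PartialOrder α] [PartialOrder β]

lemma wSum_congr {γ : Type*} [Fintype γ] (r : γ → γ → Prop) (w : γ → R)
    {C D : Finset γ → Prop} (h : ∀ I, IsLowerSetRel r I → (C I ↔ D I)) :
    wSum r w C = wSum r w D := by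
  unfold wSum
  apply Finset.sum_congr _ (fun _ _ => rfl)
  ext I
  simp only [Finset.mem_filter, Finset.mem_univ, true_and]
  exact ⟨fun ⟨hl, hc⟩ => ⟨hl, (h I hl).1 hc⟩, fun ⟨hl, hc⟩ => ⟨hl, (h I hl).2 hc⟩⟩

lemma lower_glueUp (xR : α) (yL : β) (I : Finset (α ⊕ β)) :
    IsLowerSetRel (glueUp (· ≤ · : α → α → Prop) (· ≤ · : β → β → Prop) xR yL) I ↔
      IsLowerSetRel (· ≤ ·) I.toLeft ∧ IsLowerSetRel (· ≤ ·) I.toRight ∧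
        (yL ∈ I.toRight → xR ∈ I.toLeft) := by
  constructor
  · intro h
    refine ⟨?_, ?_, ?_⟩
    · intro x hx y hyx
      rw [Finset.mem_toLeft] at hx ⊢
      exact h _ hx _ (show glueUp _ _ xR yL (.inl y) (.inl x) from hyx)
    · intro x hx y hyx
      rw [Finset.mem_toRight] at hx ⊢
      exact h _ hx _ (show glueUp _ _ xR yL (.inr y) (.inr x) from hyx)
    · intro hyL
      rw [Finset.mem_toRight] at hyL
      rw [Finset.mem_toLeft]
      exact h _ hyL _ (show glueUp _ _ xR yL (.inl xR) (.inr yL) from ⟨le_refl _, le_refl _⟩)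
  · rintro ⟨hA, hB, hc⟩ x hx y hyx
    match x, y with
    | .inl a, .inl b =>
      rw [← Finset.mem_toLeft] at hx ⊢
      exact hA _ hx _ hyx
    | .inr a, .inr b =>
      rw [← Finset.mem_toRight] at hx ⊢
      exact hB _ hx _ hyx
    | .inr a, .inl b =>
      obtain ⟨hb, ha⟩ := hyx
      rw [← Finset.mem_toRight] at hx
      rw [← Finset.mem_toLeft]
      exact hA _ (hc (hB _ hx _ ha)) _ hb
    | .inl a, .inr b => exact absurd hyx not_false

lemma wSum_glueUp_prod (wP : α → R) (wQ : β → R) (xR : α) (yL : β)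
    (CP : Finset α → Prop) (CQ : Finset β → Prop)
    (h : ∀ A B, IsLowerSetRel (· ≤ ·) A → IsLowerSetRel (· ≤ ·) B → CP A → CQ B →
      (yL ∈ B → xR ∈ A)) :
    wSum (glueUp (· ≤ · : α → α → Prop) (· ≤ · : β → β → Prop) xR yL) (Sum.elim wP wQ)
        (fun I => CP I.toLeft ∧ CQ I.toRight) =
      wSum (· ≤ ·) wP CP * wSum (· ≤ ·) wQ CQ := by
  unfold wSum
  rw [Finset.sum_mul_sum, ← Finset.sum_product']
  refine Finset.sum_nbij' (fun I => (I.toLeft, I.toRight)) (fun p => p.1.disjSum p.2)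
    ?_ ?_ ?_ ?_ ?_
  · intro I hI
    simp only [Finset.mem_filter] at hI
    obtain ⟨-, hl, hcp, hcq⟩ := hI
    rw [lower_glueUp] at hl
    simp only [Finset.mem_product, Finset.mem_filter, Finset.mem_univ, true_and]
    exact ⟨⟨hl.1, hcp⟩, ⟨hl.2.1, hcq⟩⟩
  · intro p hp
    simp only [Finset.mem_product, Finset.mem_filter, Finset.mem_univ, true_and] at hp
    obtain ⟨⟨hlA, hcA⟩, hlB, hcB⟩ := hp
    simp only [Finset.mem_filter, Finset.mem_univ, true_and]
    refine ⟨?_, ?_⟩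
    · rw [lower_glueUp]
      simp only [Finset.toLeft_disjSum, Finset.toRight_disjSum]
      exact ⟨hlA, hlB, h _ _ hlA hlB hcA hcB⟩
    · simp only [Finset.toLeft_disjSum, Finset.toRight_disjSum]
      exact ⟨hcA, hcB⟩
  · intro I _
    exact Finset.toLeft_disjSum_toRight
  · intro p _
    simp
  · intro I _
    conv_lhs => rw [← Finset.toLeft_disjSum_toRight (u := I)]
    rw [Finset.prod_sumElim]

lemma wSum_glueUp_split (wP : α → R) (wQ : β → R) (xR : α) (yL : β)
    (CP : Finset α → Prop) (CQ : Finset β → Prop) :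
    wSum (glueUp (· ≤ · : α → α → Prop) (· ≤ · : β → β → Prop) xR yL) (Sum.elim wP wQ)
        (fun I => CP I.toLeft ∧ CQ I.toRight) =
      wSum (· ≤ ·) wP (fun A => CP A ∧ xR ∈ A) * wSum (· ≤ ·) wQ CQ +
        wSum (· ≤ ·) wP (fun A => CP A ∧ xR ∉ A) *
          wSum (· ≤ ·) wQ (fun B => CQ B ∧ yL ∉ B) := by
  rw [← wSum_glueUp_prod wP wQ xR yL _ _ (fun A B _ _ hA _ _ => hA.2),
    ← wSum_glueUp_prod wP wQ xR yL _ _ (fun A B hlA hlB hA hB hyL => absurd hyL hB.2)]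
  unfold wSum
  rw [← Finset.sum_filter_add_sum_filter_not _ (fun I => xR ∈ I.toLeft)]
  congr 1
  · apply Finset.sum_congr _ (fun _ _ => rfl)
    ext I
    simp only [Finset.mem_filter, Finset.mem_univ, true_and]
    tauto
  · apply Finset.sum_congr _ (fun _ _ => rfl)
    ext I
    simp only [Finset.mem_filter, Finset.mem_univ, true_and]
    constructor
    · rintro ⟨⟨hl, hcp, hcq⟩, hxR⟩
      refine ⟨hl, ⟨hcp, hxR⟩, hcq, fun hyL => ?_⟩
      exact hxR (((lower_glueUp xR yL I).1 hl).2.2 hyL)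
    · rintro ⟨hl, ⟨hcp, hxR⟩, hcq, -⟩
      exact ⟨⟨hl, hcp, hcq⟩, hxR⟩

lemma wSum_glueUp_split' (wP : α → R) (wQ : β → R) (xR : α) (yL : β)
    (CP : Finset α → Prop) (CQ : Finset β → Prop)
    (C : Finset (α ⊕ β) → Prop) (CP1 CP2 : Finset α → Prop) (CQ2 : Finset β → Prop)
    (hC : ∀ I, C I ↔ CP I.toLeft ∧ CQ I.toRight)
    (h1 : ∀ A, CP1 A ↔ CP A ∧ xR ∈ A)
    (h2 : ∀ A, CP2 A ↔ CP A ∧ xR ∉ A)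
    (h3 : ∀ B, CQ2 B ↔ CQ B ∧ yL ∉ B) :
    wSum (glueUp (· ≤ · : α → α → Prop) (· ≤ · : β → β → Prop) xR yL) (Sum.elim wP wQ) C =
      wSum (· ≤ ·) wP CP1 * wSum (· ≤ ·) wQ CQ +
        wSum (· ≤ ·) wP CP2 * wSum (· ≤ ·) wQ CQ2 := by
  rw [wSum_congr _ _ (fun I _ => hC I), wSum_glueUp_split,
    wSum_congr _ wP (fun A _ => (h1 A).symm), wSum_congr _ wP (fun A _ => (h2 A).symm),
    wSum_congr _ wQ (fun B _ => (h3 B).symm)]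

end Aux

/-- `M_w((P↗Q)↘) = M_w(P↗) · M_w(Q↘)`. -/
theorem downMat_glueUp {α β : Type*} [Fintype α] [Fintype β]
    [PartialOrder α] [PartialOrder β] (wP : α → R) (wQ : β → R)
    (xL xR : α) (yL yR : β) :
    downMat (glueUp (· ≤ · : α → α → Prop) (· ≤ · : β → β → Prop) xR yL)
        (Sum.elim wP wQ) (Sum.inl xL) (Sum.inr yR) =
      upMat (· ≤ ·) wP xL xR * downMat (· ≤ ·) wQ yL yR := by
  unfold downMat upMat
  rw [Matrix.mul_fin_two]
  have e00 := wSum_glueUp_split' (R := R) wP wQ xR yL (fun _ => True) (fun _ => True)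
    (fun _ => True) (fun A => xR ∈ A) (fun A => xR ∉ A) (fun B => yL ∉ B)
    (fun I => by simp) (fun A => by tauto) (fun A => by tauto) (fun B => by tauto)
  have e01 := wSum_glueUp_split' (R := R) wP wQ xR yL (fun _ => True) (fun B => yR ∈ B)
    (fun I => Sum.inr yR ∈ I) (fun A => xR ∈ A) (fun A => xR ∉ A)
    (fun B => yR ∈ B ∧ yL ∉ B)
    (fun I => by simp) (fun A => by tauto) (fun A => by tauto) (fun B => by tauto)
  have e10 := wSum_glueUp_split' (R := R) wP wQ xR yL (fun A => xL ∉ A) (fun _ => True)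
    (fun I => Sum.inl xL ∉ I) (fun A => xR ∈ A ∧ xL ∉ A) (fun A => xR ∉ A ∧ xL ∉ A)
    (fun B => yL ∉ B)
    (fun I => by simp) (fun A => by tauto) (fun A => by tauto) (fun B => by tauto)
  have e11 := wSum_glueUp_split' (R := R) wP wQ xR yL (fun A => xL ∉ A) (fun B => yR ∈ B)
    (fun I => Sum.inr yR ∈ I ∧ Sum.inl xL ∉ I) (fun A => xR ∈ A ∧ xL ∉ A)
    (fun A => xR ∉ A ∧ xL ∉ A) (fun B => yR ∈ B ∧ yL ∉ B)
    (fun I => by simp [and_comm]) (fun A => by tauto) (fun A => by tauto)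
    (fun B => by tauto)
  rw [e00, e01, e10, e11]
  ext i j
  fin_cases i <;> fin_cases j <;>
    simp only [Matrix.cons_val', Matrix.cons_val_zero, Matrix.cons_val_one, Matrix.head_cons,
      Matrix.empty_val', Matrix.cons_val_fin_one, Matrix.head_fin_const] <;> ring_nf
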